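/- arXiv:2111.01845 — 6 statements merged into one kernel-verified Lean document; each statement's English description precedes it below -/
import Mathlib

section
/- Let G and H be connected graphs, both of even order, each having at least one vertex of odd degree. Then the co-even domination number of the join G + H equals |O_V(G)| + |O_V(H)|, where O_V(G) and O_V(H) denote the sets of odd-degree vertices of G and H respectively. -/
open SimpleGraph

/-- `D` is a dominating set of `G`. -/
def IsDomSet {V : Type*} (G : SimpleGraph V) (D : Set V) : Prop :=
  ∀ v ∉ D, ∃ u ∈ D, G.Adj u v

/-- `D` is a co-even dominating set of `G`: a dominating set such that
every vertex outside `D` has even degree. -/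
def IsCoEvenDomSet {V : Type*} (G : SimpleGraph V) (D : Set V) : Prop :=
  IsDomSet G D ∧ ∀ v ∉ D, Even (G.neighborSet v).ncard

/-- The domination number. -/
noncomputable def gammaD {V : Type*} (G : SimpleGraph V) : ℕ :=
  sInf {n | ∃ D : Set V, IsDomSet G D ∧ D.ncard = n}

/-- The co-even domination number. -/
noncomputable def gammaCoe {V : Type*} (G : SimpleGraph V) : ℕ :=
  sInf {n | ∃ D : Set V, IsCoEvenDomSet G D ∧ D.ncard = n}

/-- The set of vertices of odd degree. -/
def oddVerts {V : Type*} (G : SimpleGraph V) : Set V :=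
  {v | Odd (G.neighborSet v).ncard}

/-- The set of vertices of even degree. -/
def evenVerts {V : Type*} (G : SimpleGraph V) : Set V :=
  {v | Even (G.neighborSet v).ncard}

/-- The join `G + H` of two graphs. -/
def joinG {V W : Type*} (G : SimpleGraph V) (H : SimpleGraph W) : SimpleGraph (V ⊕ W) :=
  SimpleGraph.fromRel (fun a b =>
    match a, b with
    | Sum.inl u, Sum.inl v => G.Adj u v
    | Sum.inr u, Sum.inr v => H.Adj u v
    | _, _ => True)

/-- The corona `G ∘ H`: one copy of `G` and `|V(G)|` copies of `H`,
joining the `i`-th vertex of `G` to every vertex of the `i`-th copy of `H`. -/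
def corona {V W : Type*} (G : SimpleGraph V) (H : SimpleGraph W) : SimpleGraph (V ⊕ V × W) :=
  SimpleGraph.fromRel (fun a b =>
    match a, b with
    | Sum.inl u, Sum.inl v => G.Adj u v
    | Sum.inr u, Sum.inr v => u.1 = v.1 ∧ H.Adj u.2 v.2
    | Sum.inl u, Sum.inr v => u = v.1
    | Sum.inr _, Sum.inl _ => False)

/-- The neighbourhood corona `G ⋆ H`: one copy of `G` and `|V(G)|` copies of `H`,
joining every neighbour of the `i`-th vertex of `G` to every vertex of the
`i`-th copy of `H`. -/
def ncorona {V W : Type*} (G : SimpleGraph V) (H : SimpleGraph W) : SimpleGraph (V ⊕ V × W) :=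
  SimpleGraph.fromRel (fun a b =>
    match a, b with
    | Sum.inl u, Sum.inl v => G.Adj u v
    | Sum.inr u, Sum.inr v => u.1 = v.1 ∧ H.Adj u.2 v.2
    | Sum.inl u, Sum.inr v => G.Adj u v.1
    | Sum.inr _, Sum.inl _ => False)

/-- The Hajós sum `G₁(x₁y₁) +_H G₂(x₂y₂)`: delete edges `x₁y₁` and `x₂y₂`,
identify `x₁` with `x₂` (represented here by `Sum.inr x₂`), and add the edge `y₁y₂`. -/
def hajos {V₁ V₂ : Type*} (G₁ : SimpleGraph V₁) (G₂ : SimpleGraph V₂)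
    (x₁ y₁ : V₁) (x₂ y₂ : V₂) : SimpleGraph ({v : V₁ // v ≠ x₁} ⊕ V₂) :=
  SimpleGraph.fromRel (fun a b =>
    match a, b with
    | Sum.inl u, Sum.inl v => G₁.Adj u.1 v.1
    | Sum.inr u, Sum.inr v => G₂.Adj u v ∧ ¬(u = x₂ ∧ v = y₂) ∧ ¬(u = y₂ ∧ v = x₂)
    | Sum.inl u, Sum.inr v => (v = x₂ ∧ G₁.Adj x₁ u.1 ∧ u.1 ≠ y₁) ∨ (u.1 = y₁ ∧ v = y₂)
    | Sum.inr _, Sum.inl _ => False)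

/-!
In the join every vertex of `G` gains `|V(H)|` neighbours and every vertex of `H` gains `|V(G)|`,
so when both orders are even the odd vertices of `G + H` are exactly those of `G` and of `H`.
A co-even dominating set must contain every odd vertex, and since `G` and `H` each have one,
these odd vertices already dominate the join: they form a minimum co-even dominating set.
-/

theorem IsCoEvenDomSet.oddVerts_subset {V : Type*} {G : SimpleGraph V} {D : Set V}
    (hD : IsCoEvenDomSet G D) : oddVerts G ⊆ D := fun v hv => by
  by_contra hvD
  exact Nat.not_odd_iff_even.2 (hD.2 v hvD) hv

theorem isCoEvenDomSet_oddVerts {V : Type*} {G : SimpleGraph V} (h : IsDomSet G (oddVerts G)) :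
    IsCoEvenDomSet G (oddVerts G) :=
  ⟨h, fun _ hv => Nat.not_odd_iff_even.1 hv⟩

theorem gammaCoe_eq_ncard_oddVerts {V : Type*} [Finite V] {G : SimpleGraph V}
    (h : IsDomSet G (oddVerts G)) : gammaCoe G = (oddVerts G).ncard := by
  have hmem : (oddVerts G).ncard ∈ {n | ∃ D : Set V, IsCoEvenDomSet G D ∧ D.ncard = n} :=
    ⟨oddVerts G, isCoEvenDomSet_oddVerts h, rfl⟩
  refine le_antisymm (Nat.sInf_le hmem) (le_csInf ⟨_, hmem⟩ ?_)
  rintro _ ⟨D, hD, rfl⟩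
  exact Set.ncard_le_ncard hD.oddVerts_subset

theorem Set.ncard_image_inl_union_image_inr {α β : Type*} [Finite α] [Finite β]
    (s : Set α) (t : Set β) :
    (Sum.inl '' s ∪ Sum.inr '' t : Set (α ⊕ β)).ncard = s.ncard + t.ncard := by
  rw [Set.ncard_union_eq (by simp [Set.disjoint_left]),
    Set.ncard_image_of_injective _ Sum.inl_injective,
    Set.ncard_image_of_injective _ Sum.inr_injective]

namespace joinG

variable {V W : Type*} (G : SimpleGraph V) (H : SimpleGraph W)

@[simp]
theorem adj_inl_inl (u v : V) : (joinG G H).Adj (Sum.inl u) (Sum.inl v) ↔ G.Adj u v := by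
  simp only [joinG, fromRel_adj, ne_eq, Sum.inl.injEq, G.adj_comm v u, or_self,
    and_iff_right_iff_imp]
  exact Adj.ne

@[simp]
theorem adj_inr_inr (u v : W) : (joinG G H).Adj (Sum.inr u) (Sum.inr v) ↔ H.Adj u v := by
  simp only [joinG, fromRel_adj, ne_eq, Sum.inr.injEq, H.adj_comm v u, or_self,
    and_iff_right_iff_imp]
  exact Adj.ne

@[simp]
theorem adj_inl_inr (v : V) (w : W) : (joinG G H).Adj (Sum.inl v) (Sum.inr w) := by
  simp [joinG]

@[simp]
theorem adj_inr_inl (w : W) (v : V) : (joinG G H).Adj (Sum.inr w) (Sum.inl v) :=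
  (adj_inl_inr G H v w).symm

theorem neighborSet_inl (v : V) :
    (joinG G H).neighborSet (Sum.inl v) = Sum.inl '' G.neighborSet v ∪ Set.range Sum.inr := by
  ext (u | w) <;> simp

theorem neighborSet_inr (w : W) :
    (joinG G H).neighborSet (Sum.inr w) = Sum.inr '' H.neighborSet w ∪ Set.range Sum.inl := by
  ext (v | u) <;> simp

theorem ncard_neighborSet_inl [Finite V] [Finite W] (v : V) :
    ((joinG G H).neighborSet (Sum.inl v)).ncard = (G.neighborSet v).ncard + Nat.card W := by
  rw [neighborSet_inl, Set.ncard_union_eq (by simp [Set.disjoint_left]),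
    Set.ncard_image_of_injective _ Sum.inl_injective, ← Set.image_univ,
    Set.ncard_image_of_injective _ Sum.inr_injective, Set.ncard_univ]

theorem ncard_neighborSet_inr [Finite V] [Finite W] (w : W) :
    ((joinG G H).neighborSet (Sum.inr w)).ncard = (H.neighborSet w).ncard + Nat.card V := by
  rw [neighborSet_inr, Set.ncard_union_eq (by simp [Set.disjoint_left]),
    Set.ncard_image_of_injective _ Sum.inr_injective, ← Set.image_univ,
    Set.ncard_image_of_injective _ Sum.inl_injective, Set.ncard_univ]

theorem oddVerts_eq [Finite V] [Finite W] (hV : Even (Nat.card V)) (hW : Even (Nat.card W)) :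
    oddVerts (joinG G H) = Sum.inl '' oddVerts G ∪ Sum.inr '' oddVerts H := by
  ext (v | w)
  · simp [oddVerts, ncard_neighborSet_inl, Nat.odd_add, hW]
  · simp [oddVerts, ncard_neighborSet_inr, Nat.odd_add, hV]

theorem isDomSet_image_inl_union_image_inr {s : Set V} {t : Set W}
    (hs : s.Nonempty) (ht : t.Nonempty) : IsDomSet (joinG G H) (Sum.inl '' s ∪ Sum.inr '' t) := by
  obtain ⟨v, hv⟩ := hs
  obtain ⟨w, hw⟩ := ht
  rintro (x | x) -
  · exact ⟨Sum.inr w, Or.inr ⟨w, hw, rfl⟩, adj_inr_inl G H w x⟩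
  · exact ⟨Sum.inl v, Or.inl ⟨v, hv, rfl⟩, adj_inl_inr G H v x⟩

end joinG

theorem stmt5_general {V W : Type*} [Fintype V] [Fintype W]
    (G : SimpleGraph V) (H : SimpleGraph W)
    (hV : Even (Fintype.card V)) (hW : Even (Fintype.card W))
    (hOG : ∃ v, Odd (G.neighborSet v).ncard)
    (hOH : ∃ w, Odd (H.neighborSet w).ncard) :
    gammaCoe (joinG G H) = (oddVerts G).ncard + (oddVerts H).ncard := by
  rw [← Nat.card_eq_fintype_card] at hV hW
  have hodd := joinG.oddVerts_eq G H hV hW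
  have hdom : IsDomSet (joinG G H) (oddVerts (joinG G H)) :=
    hodd ▸ joinG.isDomSet_image_inl_union_image_inr G H hOG hOH
  rw [gammaCoe_eq_ncard_oddVerts hdom, hodd, Set.ncard_image_inl_union_image_inr]

theorem stmt5 {V W : Type*} [Fintype V] [Fintype W]
    (G : SimpleGraph V) (H : SimpleGraph W)
    (hG : G.Connected) (hH : H.Connected)
    (hV : Even (Fintype.card V)) (hW : Even (Fintype.card W))
    (hOG : ∃ v, Odd (G.neighborSet v).ncard)
    (hOH : ∃ w, Odd (H.neighborSet w).ncard) :
    gammaCoe (joinG G H) = (oddVerts G).ncard + (oddVerts H).ncard :=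
  stmt5_general G H hV hW hOG hOH
end

section
/- Let G and H be connected graphs, both of odd order, each having at least one vertex of even degree. Then γ_coe(G + H) = |E_V(G)| + |E_V(H)|, where E_V(G) and E_V(H) denote the sets of even-degree vertices of G and H respectively. -/
open SimpleGraph

theorem stmt7 {V W : Type*} [Fintype V] [Fintype W]
    (G : SimpleGraph V) (H : SimpleGraph W)
    (hG : G.Connected) (hH : H.Connected)
    (hV : Odd (Fintype.card V)) (hW : Odd (Fintype.card W))
    (hEG : ∃ v, Even (G.neighborSet v).ncard)
    (hEH : ∃ w, Even (H.neighborSet w).ncard) :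
    gammaCoe (joinG G H) = (evenVerts G).ncard + (evenVerts H).ncard := by
  classical
  set J := joinG G H with hJ
  have hadjLL : ∀ u v : V, J.Adj (Sum.inl u) (Sum.inl v) ↔ G.Adj u v := by
    intro u v
    simp only [hJ, joinG, SimpleGraph.fromRel_adj, ne_eq, Sum.inl.injEq]
    constructor
    · rintro ⟨h, h2 | h2⟩
      · exact h2
      · exact h2.symm
    · intro h
      exact ⟨fun e => G.loopless.irrefl u (e ▸ h), Or.inl h⟩
  have hadjRR : ∀ u v : W, J.Adj (Sum.inr u) (Sum.inr v) ↔ H.Adj u v := by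
    intro u v
    simp only [hJ, joinG, SimpleGraph.fromRel_adj, ne_eq, Sum.inr.injEq]
    constructor
    · rintro ⟨h, h2 | h2⟩
      · exact h2
      · exact h2.symm
    · intro h
      exact ⟨fun e => H.loopless.irrefl u (e ▸ h), Or.inl h⟩
  have hadjLR : ∀ (u : V) (w : W), J.Adj (Sum.inl u) (Sum.inr w) := by
    intro u w
    simp [hJ, joinG, SimpleGraph.fromRel_adj]
  have hNl : ∀ v : V, J.neighborSet (Sum.inl v) =
      Sum.inl '' G.neighborSet v ∪ Set.range Sum.inr := by
    intro v
    ext x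
    cases x with
    | inl u =>
      simp [SimpleGraph.mem_neighborSet, hadjLL]
    | inr w =>
      simp [SimpleGraph.mem_neighborSet, hadjLR]
  have hNr : ∀ w : W, J.neighborSet (Sum.inr w) =
      Sum.inr '' H.neighborSet w ∪ Set.range Sum.inl := by
    intro w
    ext x
    cases x with
    | inl u =>
      simpa [SimpleGraph.mem_neighborSet] using (hadjLR u w).symm
    | inr u =>
      simp [SimpleGraph.mem_neighborSet, hadjRR]
  have hdisj1 : Disjoint (Sum.inl '' (Set.univ : Set V) : Set (V ⊕ W)) (Set.range Sum.inr) := by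
    rw [Set.disjoint_left]
    rintro x ⟨u, _, rfl⟩ ⟨w, hw⟩
    exact Sum.inl_ne_inr hw.symm
  have hcardL : ∀ v : V, (J.neighborSet (Sum.inl v)).ncard =
      (G.neighborSet v).ncard + Fintype.card W := by
    intro v
    rw [hNl v, Set.ncard_union_eq ?_ (Set.toFinite _) (Set.toFinite _),
      Set.ncard_image_of_injective _ Sum.inl_injective, ← Set.image_univ,
      Set.ncard_image_of_injective _ Sum.inr_injective, Set.ncard_univ,
      Nat.card_eq_fintype_card]
    rw [Set.disjoint_left]
    rintro x ⟨u, _, rfl⟩ ⟨w, hw⟩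
    exact Sum.inl_ne_inr hw.symm
  have hcardR : ∀ w : W, (J.neighborSet (Sum.inr w)).ncard =
      (H.neighborSet w).ncard + Fintype.card V := by
    intro w
    rw [hNr w, Set.ncard_union_eq ?_ (Set.toFinite _) (Set.toFinite _),
      Set.ncard_image_of_injective _ Sum.inr_injective, ← Set.image_univ,
      Set.ncard_image_of_injective _ Sum.inl_injective, Set.ncard_univ,
      Nat.card_eq_fintype_card]
    rw [Set.disjoint_left]
    rintro x ⟨u, _, rfl⟩ ⟨w', hw⟩
    exact Sum.inl_ne_inr hw
  have hWodd : ¬ Even (Fintype.card W) := Nat.not_even_iff_odd.mpr hW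
  have hVodd : ¬ Even (Fintype.card V) := Nat.not_even_iff_odd.mpr hV
  have hparL : ∀ v : V, Even ((J.neighborSet (Sum.inl v)).ncard) ↔
      Odd (G.neighborSet v).ncard := by
    intro v
    rw [hcardL v, Nat.even_add, ← Nat.not_even_iff_odd]
    tauto
  have hparR : ∀ w : W, Even ((J.neighborSet (Sum.inr w)).ncard) ↔
      Odd (H.neighborSet w).ncard := by
    intro w
    rw [hcardR w, Nat.even_add, ← Nat.not_even_iff_odd]
    tauto
  set M : Set (V ⊕ W) := Sum.inl '' evenVerts G ∪ Sum.inr '' evenVerts H with hM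
  have hMcard : M.ncard = (evenVerts G).ncard + (evenVerts H).ncard := by
    rw [hM, Set.ncard_union_eq ?_ (Set.toFinite _) (Set.toFinite _),
      Set.ncard_image_of_injective _ Sum.inl_injective,
      Set.ncard_image_of_injective _ Sum.inr_injective]
    rw [Set.disjoint_left]
    rintro x ⟨u, _, rfl⟩ ⟨w, _, hw⟩
    exact Sum.inl_ne_inr hw.symm
  obtain ⟨v₀, hv₀⟩ := hEG
  obtain ⟨w₀, hw₀⟩ := hEH
  have hMcoe : IsCoEvenDomSet J M := by
    constructor
    · intro x hx
      cases x with
      | inl u =>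
        exact ⟨Sum.inr w₀, Or.inr ⟨w₀, hw₀, rfl⟩, (J.adj_symm (hadjLR u w₀))⟩
      | inr w =>
        exact ⟨Sum.inl v₀, Or.inl ⟨v₀, hv₀, rfl⟩, hadjLR v₀ w⟩
    · intro x hx
      cases x with
      | inl u =>
        have hu : u ∉ evenVerts G := fun h => hx (Or.inl ⟨u, h, rfl⟩)
        rw [hparL u]
        exact Nat.not_even_iff_odd.mp hu
      | inr w =>
        have hw : w ∉ evenVerts H := fun h => hx (Or.inr ⟨w, h, rfl⟩)
        rw [hparR w]
        exact Nat.not_even_iff_odd.mp hw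
  have hlb : ∀ D : Set (V ⊕ W), IsCoEvenDomSet J D → M ⊆ D := by
    intro D hD x hxM
    by_contra hxD
    have hev := hD.2 x hxD
    rcases hxM with ⟨u, hu, rfl⟩ | ⟨w, hw, rfl⟩
    · rw [hparL u] at hev
      exact (Nat.not_even_iff_odd.mpr hev) hu
    · rw [hparR w] at hev
      exact (Nat.not_even_iff_odd.mpr hev) hw
  have hmem : M.ncard ∈ {n | ∃ D : Set (V ⊕ W), IsCoEvenDomSet J D ∧ D.ncard = n} :=
    ⟨M, hMcoe, rfl⟩
  have : gammaCoe J = M.ncard := by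
    refine le_antisymm (Nat.sInf_le hmem) (le_csInf ⟨M.ncard, hmem⟩ ?_)
    rintro n ⟨D, hD, rfl⟩
    exact Set.ncard_le_ncard (hlb D hD) (Set.toFinite D)
  rw [this, hMcard]
end

section
/- Let G and H be connected graphs with H ≠ K_1. If every vertex of H has odd degree, then the co-even domination number of the corona G ∘ H equals |V(G)|. -/
open SimpleGraph

lemma ncard_range_aux {α β : Type*} [Fintype α] {f : α → β} (hf : Function.Injective f) :
    (Set.range f).ncard = Fintype.card α := by
  rw [← Nat.card_coe_set_eq, Nat.card_range_of_injective hf, Nat.card_eq_fintype_card]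

lemma corona_adj_inr_inl {V W : Type*} (G : SimpleGraph V) (H : SimpleGraph W)
    (v : V) (p : V × W) : (corona G H).Adj (Sum.inr p) (Sum.inl v) ↔ v = p.1 := by
  simp [corona, SimpleGraph.fromRel_adj]

lemma corona_adj_inr_inr {V W : Type*} (G : SimpleGraph V) (H : SimpleGraph W)
    (p q : V × W) : (corona G H).Adj (Sum.inr p) (Sum.inr q) ↔ p.1 = q.1 ∧ H.Adj p.2 q.2 := by
  constructor
  · rintro ⟨hne, h | h⟩
    · exact h
    · exact ⟨h.1.symm, h.2.symm⟩
  · rintro ⟨h1, h2⟩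
    refine ⟨fun h => ?_, Or.inl ⟨h1, h2⟩⟩
    cases Sum.inr_injective h
    exact H.loopless.irrefl _ h2

lemma corona_neighborSet_inr {V W : Type*} (G : SimpleGraph V) (H : SimpleGraph W)
    (v : V) (w : W) :
    (corona G H).neighborSet (Sum.inr (v, w)) =
      insert (Sum.inl v) ((fun w' => (Sum.inr (v, w') : V ⊕ V × W)) '' H.neighborSet w) := by
  ext x
  cases x with
  | inl u =>
      simp only [SimpleGraph.mem_neighborSet, Set.mem_insert_iff, Set.mem_image]
      rw [corona_adj_inr_inl]
      simp [eq_comm]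
  | inr p =>
      obtain ⟨u, w'⟩ := p
      simp only [SimpleGraph.mem_neighborSet, Set.mem_insert_iff, Set.mem_image]
      rw [corona_adj_inr_inr]
      constructor
      · rintro ⟨h1, h2⟩
        exact Or.inr ⟨w', h2, by simp [show v = u from h1]⟩
      · rintro (h | ⟨y, hy, heq⟩)
        · simp at h
        · simp only [Sum.inr.injEq, Prod.mk.injEq] at heq
          obtain ⟨rfl, rfl⟩ := heq
          exact ⟨rfl, hy⟩

theorem stmt9 {V W : Type*} [Fintype V] [Fintype W] [Nontrivial W]
    (G : SimpleGraph V) (H : SimpleGraph W)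
    (hG : G.Connected) (hH : H.Connected)
    (hodd : ∀ w, Odd (H.neighborSet w).ncard) :
    gammaCoe (corona G H) = Fintype.card V := by
  classical
  set D : Set (V ⊕ V × W) := Set.range Sum.inl with hD
  have hmem : Fintype.card V ∈ {n | ∃ D : Set (V ⊕ V × W),
      IsCoEvenDomSet (corona G H) D ∧ D.ncard = n} := by
    refine ⟨D, ⟨⟨?_, ?_⟩, ?_⟩⟩
    · rintro (v | ⟨v, w⟩) hv
      · exact absurd ⟨v, rfl⟩ hv
      · exact ⟨Sum.inl v, ⟨v, rfl⟩, ((corona G H).adj_comm ..).mp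
          ((corona_adj_inr_inl G H v (v, w)).mpr rfl)⟩
    · rintro (v | ⟨v, w⟩) hv
      · exact absurd ⟨v, rfl⟩ hv
      · rw [corona_neighborSet_inr, Set.ncard_insert_of_notMem (by simp)
          (Set.Finite.image _ (Set.toFinite _))]
        rw [Set.ncard_image_of_injective _ (fun a b h => by simpa using h)]
        obtain ⟨k, hk⟩ := hodd w
        exact ⟨k + 1, by omega⟩
    · rw [hD, ncard_range_aux Sum.inl_injective]
  have hlb : ∀ n ∈ {n | ∃ D : Set (V ⊕ V × W),
      IsCoEvenDomSet (corona G H) D ∧ D.ncard = n}, Fintype.card V ≤ n := by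
    rintro n ⟨E, ⟨⟨hdom, _⟩, rfl⟩⟩
    obtain ⟨w₀⟩ := (inferInstance : Nonempty W)
    -- cluster index
    set π : V ⊕ V × W → V := fun x => match x with | Sum.inl v => v | Sum.inr p => p.1
    have hcl : ∀ v : V, ∃ x ∈ E, π x = v := by
      intro v
      by_cases hv : Sum.inr (v, w₀) ∈ E
      · exact ⟨_, hv, rfl⟩
      · obtain ⟨u, hu, hadj⟩ := hdom _ hv
        refine ⟨u, hu, ?_⟩
        cases u with
        | inl u' => exact (corona_adj_inr_inl G H u' (v, w₀)).mp (hadj.symm)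
        | inr p => exact ((corona_adj_inr_inr G H p (v, w₀)).mp hadj).1
    choose f hfE hfπ using hcl
    have hfinj : Function.Injective f := by
      intro a b hab
      rw [← hfπ a, ← hfπ b, hab]
    have : Set.range f ⊆ E := by rintro x ⟨v, rfl⟩; exact hfE v
    calc Fintype.card V = (Set.range f).ncard :=
          (ncard_range_aux hfinj).symm
      _ ≤ E.ncard := Set.ncard_le_ncard this (Set.toFinite E)
  exact le_antisymm (Nat.sInf_le hmem) (le_csInf ⟨_, hmem⟩ hlb)
end

section
/- For the path P_n (n ≥ 2), γ_coe(P_n ∘ K_1) = 2n − 2, and for the cycle C_n (n ≥ 3), γ_coe(C_n ∘ K_1) = 2n. -/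
open SimpleGraph

section AuxCoe

variable {n : ℕ}

lemma corona_nbhd_inr (G : SimpleGraph (Fin n)) (p : Fin n × Fin 1) :
    (corona G (⊤ : SimpleGraph (Fin 1))).neighborSet (Sum.inr p) = {Sum.inl p.1} := by
  ext a
  cases a with
  | inl u => simp [corona, SimpleGraph.fromRel_adj, eq_comm]
  | inr q => simp [corona, SimpleGraph.fromRel_adj, Subsingleton.elim p.2 q.2]

lemma corona_nbhd_inl (G : SimpleGraph (Fin n)) (u : Fin n) :
    (corona G (⊤ : SimpleGraph (Fin 1))).neighborSet (Sum.inl u) =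
      Sum.inl '' (G.neighborSet u) ∪ {Sum.inr (u, 0)} := by
  ext a
  cases a with
  | inl v =>
    simp only [mem_neighborSet, corona, SimpleGraph.fromRel_adj, Set.mem_union,
      Set.mem_image, Set.mem_singleton_iff]
    constructor
    · rintro ⟨hne, h | h⟩
      · exact Or.inl ⟨v, h, rfl⟩
      · exact Or.inl ⟨v, h.symm, rfl⟩
    · rintro (⟨w, hw, hww⟩ | h)
      · cases hww
        exact ⟨fun h => G.irrefl (Sum.inl.inj h ▸ hw), Or.inl hw⟩
      · simp at h
  | inr q =>
    simp only [mem_neighborSet, corona, SimpleGraph.fromRel_adj, Set.mem_union,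
      Set.mem_image, Set.mem_singleton_iff]
    constructor
    · rintro ⟨hne, h | h⟩
      · right; cases h; exact congrArg Sum.inr (Prod.ext rfl (Subsingleton.elim _ _))
      · simp at h
    · rintro h
      cases h with
      | inl h => simp at h
      | inr h => cases h; exact ⟨by simp, Or.inl rfl⟩

lemma corona_deg_inr (G : SimpleGraph (Fin n)) (p : Fin n × Fin 1) :
    ((corona G (⊤ : SimpleGraph (Fin 1))).neighborSet (Sum.inr p)).ncard = 1 := by
  rw [corona_nbhd_inr]; exact Set.ncard_singleton _

lemma corona_deg_inl (G : SimpleGraph (Fin n)) (u : Fin n) :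
    ((corona G (⊤ : SimpleGraph (Fin 1))).neighborSet (Sum.inl u)).ncard =
      (G.neighborSet u).ncard + 1 := by
  rw [corona_nbhd_inl,
    Set.ncard_union_eq (by simp [Set.disjoint_singleton_right]) (Set.toFinite _) (Set.toFinite _),
    Set.ncard_image_of_injective _ Sum.inl_injective, Set.ncard_singleton]

lemma path_nbhd_left (u : Fin n) (h0 : u.val = 0) (h1 : 2 ≤ n) :
    (pathGraph n).neighborSet u = {⟨1, by omega⟩} := by
  ext v
  simp only [mem_neighborSet, pathGraph_adj, Set.mem_singleton_iff, Fin.ext_iff]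
  omega

lemma path_nbhd_right (u : Fin n) (h0 : u.val = n - 1) (h1 : 2 ≤ n) :
    (pathGraph n).neighborSet u = {⟨n - 2, by omega⟩} := by
  ext v
  simp only [mem_neighborSet, pathGraph_adj, Set.mem_singleton_iff, Fin.ext_iff]
  omega

lemma path_nbhd_mid (u : Fin n) (h0 : u.val ≠ 0) (h1 : u.val ≠ n - 1) :
    (pathGraph n).neighborSet u = {⟨u.val - 1, by omega⟩, ⟨u.val + 1, by omega⟩} := by
  ext v
  simp only [mem_neighborSet, pathGraph_adj, Set.mem_insert_iff, Set.mem_singleton_iff,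
    Fin.ext_iff]
  omega

lemma path_deg_mid (u : Fin n) (h0 : u.val ≠ 0) (h1 : u.val ≠ n - 1) :
    ((pathGraph n).neighborSet u).ncard = 2 := by
  rw [path_nbhd_mid u h0 h1]
  exact Set.ncard_pair (by simp only [ne_eq, Fin.mk.injEq]; omega)

lemma cycle_deg (k : ℕ) (v : Fin (k + 3)) :
    ((cycleGraph (k + 3)).neighborSet v).ncard = 2 := by
  have hset := SimpleGraph.cycleGraph_neighborSet (n := k + 1) (v := v)
  rw [hset]
  exact Set.ncard_pair (by
    intro h
    have h2 : (0 : Fin (k + 3)) = 2 := by open Fin.CommRing in linear_combination h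
    rw [Fin.ext_iff, Fin.val_zero, Fin.val_two] at h2
    omega)

lemma univ_ncard_corona : (Set.univ : Set (Fin n ⊕ Fin n × Fin 1)).ncard = 2 * n := by
  rw [Set.ncard_univ]
  simp [Nat.card_eq_fintype_card]
  ring

end AuxCoe

theorem stmt13 (n : ℕ) :
    (2 ≤ n → gammaCoe (corona (pathGraph n) (⊤ : SimpleGraph (Fin 1))) = 2 * n - 2) ∧
    (3 ≤ n → gammaCoe (corona (cycleGraph n) (⊤ : SimpleGraph (Fin 1))) = 2 * n) := by
  constructor
  · -- path case
    intro hn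
    set Sint : Set (Fin n) := {u : Fin n | u.val ≠ 0 ∧ u.val ≠ n - 1} with hSint
    set D : Set (Fin n ⊕ Fin n × Fin 1) :=
      Sum.inl '' Sint ∪ Sum.inr '' Set.univ with hD
    have hmemr : ∀ q : Fin n × Fin 1, Sum.inr q ∈ D := fun q =>
      Set.mem_union_right _ ⟨q, trivial, rfl⟩
    have hadj : ∀ u : Fin n,
        (corona (pathGraph n) (⊤ : SimpleGraph (Fin 1))).Adj (Sum.inr (u, 0)) (Sum.inl u) := by
      intro u
      simp [corona, SimpleGraph.fromRel_adj]
    have hDcard : D.ncard = 2 * n - 2 := by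
      rw [hD, Set.ncard_union_eq (by simp [Set.disjoint_left]) (Set.toFinite _) (Set.toFinite _),
        Set.ncard_image_of_injective _ Sum.inl_injective,
        Set.ncard_image_of_injective _ Sum.inr_injective, Set.ncard_univ]
      have hSc : Sint.ncard = n - 2 := by
        have hset : Sint = ({⟨0, by omega⟩, ⟨n - 1, by omega⟩} : Set (Fin n))ᶜ := by
          ext v; simp [hSint, Fin.ext_iff]
        rw [hset]
        have h2 : ({⟨0, by omega⟩, ⟨n - 1, by omega⟩} : Set (Fin n)).ncard = 2 :=
          Set.ncard_pair (by simp only [ne_eq, Fin.mk.injEq]; omega)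
        have hc := Set.ncard_add_ncard_compl
          ({⟨0, by omega⟩, ⟨n - 1, by omega⟩} : Set (Fin n))
        rw [h2] at hc
        simp only [Nat.card_eq_fintype_card, Fintype.card_fin] at hc
        omega
      rw [hSc]
      simp only [Nat.card_eq_fintype_card, Fintype.card_prod, Fintype.card_fin]
      omega
    have hmeml : ∀ u : Fin n, u.val ≠ 0 → u.val ≠ n - 1 → Sum.inl u ∈ D := fun u h0 h1 =>
      Set.mem_union_left _ ⟨u, ⟨h0, h1⟩, rfl⟩
    have hnotmem : ∀ v : Fin n ⊕ Fin n × Fin 1, v ∉ D →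
        ∃ u : Fin n, v = Sum.inl u ∧ (u.val = 0 ∨ u.val = n - 1) := by
      intro v hv
      cases v with
      | inl u =>
        refine ⟨u, rfl, ?_⟩
        by_contra hc
        push_neg at hc
        exact hv (hmeml u hc.1 hc.2)
      | inr q => exact absurd (hmemr q) hv
    have hDco : IsCoEvenDomSet (corona (pathGraph n) (⊤ : SimpleGraph (Fin 1))) D := by
      constructor
      · intro v hv
        obtain ⟨u, rfl, _⟩ := hnotmem v hv
        exact ⟨Sum.inr (u, 0), hmemr _, hadj u⟩
      · intro v hv
        obtain ⟨u, rfl, hu⟩ := hnotmem v hv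
        rw [corona_deg_inl]
        rcases hu with h0 | h1
        · rw [path_nbhd_left u h0 hn, Set.ncard_singleton]
          exact ⟨1, rfl⟩
        · rw [path_nbhd_right u h1 hn, Set.ncard_singleton]
          exact ⟨1, rfl⟩
    have hforce : ∀ D' : Set (Fin n ⊕ Fin n × Fin 1),
        IsCoEvenDomSet (corona (pathGraph n) (⊤ : SimpleGraph (Fin 1))) D' → D ⊆ D' := by
      intro D' hD' v hv
      by_contra hvn
      have heven := hD'.2 v hvn
      cases v with
      | inl u =>
        have hu : u ∈ Sint := by
          rcases hv with ⟨w, hw, hwe⟩ | ⟨w, _, hwe⟩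
          · cases Sum.inl.inj hwe; exact hw
          · exact absurd hwe (by simp)
        rw [corona_deg_inl, path_deg_mid u hu.1 hu.2] at heven
        exact (by decide : ¬ Even 3) heven
      | inr q =>
        rw [corona_deg_inr] at heven
        exact (by decide : ¬ Even 1) heven
    apply le_antisymm
    · exact Nat.sInf_le ⟨D, hDco, hDcard⟩
    · refine le_csInf ⟨2 * n - 2, D, hDco, hDcard⟩ ?_
      rintro m ⟨D', hD', rfl⟩
      calc 2 * n - 2 = D.ncard := hDcard.symm
        _ ≤ D'.ncard := Set.ncard_le_ncard (hforce D' hD') (Set.toFinite _)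
  · -- cycle case
    intro hn
    obtain ⟨k, rfl⟩ : ∃ k, n = k + 3 := ⟨n - 3, by omega⟩
    set G := corona (cycleGraph (k + 3)) (⊤ : SimpleGraph (Fin 1)) with hG
    have hodd : ∀ v : Fin (k + 3) ⊕ Fin (k + 3) × Fin 1, Odd ((G.neighborSet v).ncard) := by
      intro v
      cases v with
      | inl u =>
        rw [hG, corona_deg_inl, cycle_deg k u]
        exact ⟨1, rfl⟩
      | inr q =>
        rw [hG, corona_deg_inr]
        exact ⟨0, rfl⟩
    have huniv : IsCoEvenDomSet G (Set.univ : Set (Fin (k + 3) ⊕ Fin (k + 3) × Fin 1)) :=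
      ⟨fun v hv => absurd (Set.mem_univ v) hv, fun v hv => absurd (Set.mem_univ v) hv⟩
    have hucard : (Set.univ : Set (Fin (k + 3) ⊕ Fin (k + 3) × Fin 1)).ncard = 2 * (k + 3) :=
      univ_ncard_corona
    apply le_antisymm
    · exact Nat.sInf_le ⟨Set.univ, huniv, hucard⟩
    · refine le_csInf ⟨2 * (k + 3), Set.univ, huniv, hucard⟩ ?_
      rintro m ⟨D', hD', rfl⟩
      have hsub : (Set.univ : Set (Fin (k + 3) ⊕ Fin (k + 3) × Fin 1)) ⊆ D' := by
        intro v _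
        by_contra hvn
        exact (Nat.not_even_iff_odd.mpr (hodd v)) (hD'.2 v hvn)
      calc 2 * (k + 3) = (Set.univ : Set (Fin (k + 3) ⊕ Fin (k + 3) × Fin 1)).ncard :=
            hucard.symm
        _ ≤ D'.ncard := Set.ncard_le_ncard hsub (Set.toFinite _)
end

section
/- For connected graphs G and H, γ_coe(G ⋆ H) ≥ |O_V(G)|·|E_V(H)| + |E_V(G)|·|O_V(H)|, where G ⋆ H is the neighbourhood corona, O_V denotes the set of odd-degree vertices and E_V the set of even-degree vertices. -/
open SimpleGraph

theorem isCoEvenDomSet_univ {V : Type*} (G : SimpleGraph V) : IsCoEvenDomSet G Set.univ :=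
  ⟨fun v hv => absurd (Set.mem_univ v) hv, fun v hv => absurd (Set.mem_univ v) hv⟩

theorem ncard_oddVerts_le_gammaCoe {V : Type*} [Finite V] (G : SimpleGraph V) :
    (oddVerts G).ncard ≤ gammaCoe G := by
  have hne : {n | ∃ D : Set V, IsCoEvenDomSet G D ∧ D.ncard = n}.Nonempty :=
    ⟨_, Set.univ, isCoEvenDomSet_univ G, rfl⟩
  obtain ⟨D, hD, hDcard⟩ := Nat.sInf_mem hne
  rw [gammaCoe, ← hDcard]
  exact Set.ncard_le_ncard hD.oddVerts_subset

theorem disjoint_oddVerts_evenVerts {V : Type*} (G : SimpleGraph V) :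
    Disjoint (oddVerts G) (evenVerts G) :=
  Set.disjoint_left.mpr fun _ hodd heven => Nat.not_odd_iff_even.mpr heven hodd

theorem ncorona_neighborSet_inr {V W : Type*} (G : SimpleGraph V) (H : SimpleGraph W)
    (v : V) (w : W) :
    (ncorona G H).neighborSet (Sum.inr (v, w)) =
      Sum.inl '' G.neighborSet v ∪ Sum.inr '' (Prod.mk v '' H.neighborSet w) := by
  ext (u | ⟨v', w'⟩)
  · simp [ncorona, adj_comm]
  · simp only [ncorona, mem_neighborSet, fromRel_adj, ne_eq, Sum.inr.injEq, Prod.mk.injEq,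
      not_and, Set.mem_union, Set.mem_image, reduceCtorEq, and_false, exists_false,
      exists_eq_right, exists_eq_right_right, false_or]
    constructor
    · rintro ⟨-, ⟨rfl, h⟩ | ⟨rfl, h⟩⟩
      · exact ⟨h, rfl⟩
      · exact ⟨h.symm, rfl⟩
    · rintro ⟨h, rfl⟩
      exact ⟨fun _ e => h.ne e, Or.inl ⟨rfl, h⟩⟩

theorem ncorona_degree_inr {V W : Type*} [Finite V] [Finite W]
    (G : SimpleGraph V) (H : SimpleGraph W) (v : V) (w : W) :
    ((ncorona G H).neighborSet (Sum.inr (v, w))).ncard =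
      (G.neighborSet v).ncard + (H.neighborSet w).ncard := by
  rw [ncorona_neighborSet_inr, Set.ncard_union_eq, Set.ncard_image_of_injective _ Sum.inl_injective,
    Set.ncard_image_of_injective _ Sum.inr_injective,
    Set.ncard_image_of_injective _ (Prod.mk_right_injective v)]
  exact Set.disjoint_left.mpr (by rintro _ ⟨u, -, rfl⟩ ⟨p, -, h⟩; cases h)

theorem image_inr_subset_oddVerts_ncorona {V W : Type*} [Finite V] [Finite W]
    (G : SimpleGraph V) (H : SimpleGraph W) :
    Sum.inr '' (oddVerts G ×ˢ evenVerts H ∪ evenVerts G ×ˢ oddVerts H) ⊆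
      oddVerts (ncorona G H) := by
  rintro _ ⟨⟨v, w⟩, hvw, rfl⟩
  change Odd _
  rw [ncorona_degree_inr]
  rcases hvw with ⟨hv, hw⟩ | ⟨hv, hw⟩
  · exact Odd.add_even hv hw
  · exact Even.add_odd hv hw

theorem stmt14_general {V W : Type*} [Fintype V] [Fintype W]
    (G : SimpleGraph V) (H : SimpleGraph W) :
    (oddVerts G).ncard * (evenVerts H).ncard +
      (evenVerts G).ncard * (oddVerts H).ncard ≤ gammaCoe (ncorona G H) := by
  have hdisj : Disjoint (oddVerts G ×ˢ evenVerts H) (evenVerts G ×ˢ oddVerts H) :=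
    Set.disjoint_prod.mpr (.inl (disjoint_oddVerts_evenVerts G))
  calc (oddVerts G).ncard * (evenVerts H).ncard + (evenVerts G).ncard * (oddVerts H).ncard
      = (Sum.inr '' (oddVerts G ×ˢ evenVerts H ∪ evenVerts G ×ˢ oddVerts H) :
          Set (V ⊕ V × W)).ncard := by
        rw [Set.ncard_image_of_injective _ Sum.inr_injective, Set.ncard_union_eq hdisj,
          Set.ncard_prod, Set.ncard_prod]
    _ ≤ (oddVerts (ncorona G H)).ncard :=
        Set.ncard_le_ncard (image_inr_subset_oddVerts_ncorona G H)
    _ ≤ gammaCoe (ncorona G H) := ncard_oddVerts_le_gammaCoe _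

theorem stmt14 {V W : Type*} [Fintype V] [Fintype W]
    (G : SimpleGraph V) (H : SimpleGraph W)
    (hG : G.Connected) (hH : H.Connected) :
    (oddVerts G).ncard * (evenVerts H).ncard +
      (evenVerts G).ncard * (oddVerts H).ncard ≤ gammaCoe (ncorona G H) :=
  stmt14_general G H
end

section
/- Let G₁ and G₂ be connected graphs with disjoint vertex sets, x₁y₁ an edge of G₁ and x₂y₂ an edge of G₂. Then for the Hajós sum G₃ = G₁(x₁y₁) +_H G₂(x₂y₂), we have γ_coe(G₃) ≤ γ_coe(G₁) + γ_coe(G₂) + 1. -/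
open SimpleGraph

section Lemmas
variable {V₁ V₂ : Type*} (G₁ : SimpleGraph V₁) (G₂ : SimpleGraph V₂) (x₁ y₁ : V₁) (x₂ y₂ : V₂)

lemma hajos_adj_inl_inl (u v : {v : V₁ // v ≠ x₁}) :
    (hajos G₁ G₂ x₁ y₁ x₂ y₂).Adj (Sum.inl u) (Sum.inl v) ↔ G₁.Adj u.1 v.1 := by
  simp only [hajos, SimpleGraph.fromRel_adj]
  constructor
  · rintro ⟨-, h | h⟩
    · exact h
    · exact h.symm
  · intro h
    refine ⟨?_, Or.inl h⟩
    intro he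
    exact G₁.ne_of_adj h (congrArg Subtype.val (Sum.inl.inj he))

lemma hajos_adj_inr_inr (u v : V₂) :
    (hajos G₁ G₂ x₁ y₁ x₂ y₂).Adj (Sum.inr u : {v : V₁ // v ≠ x₁} ⊕ V₂) (Sum.inr v) ↔
      G₂.Adj u v ∧ ¬(u = x₂ ∧ v = y₂) ∧ ¬(u = y₂ ∧ v = x₂) := by
  simp only [hajos, SimpleGraph.fromRel_adj]
  constructor
  · rintro ⟨-, ⟨h, h3, h4⟩ | ⟨h, h3, h4⟩⟩
    · exact ⟨h, h3, h4⟩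
    · exact ⟨h.symm, fun hc => h4 ⟨hc.2, hc.1⟩, fun hc => h3 ⟨hc.2, hc.1⟩⟩
  · rintro ⟨h, h3, h4⟩
    exact ⟨by simp [G₂.ne_of_adj h], Or.inl ⟨h, h3, h4⟩⟩

lemma hajos_adj_inl_inr (u : {v : V₁ // v ≠ x₁}) (v : V₂) :
    (hajos G₁ G₂ x₁ y₁ x₂ y₂).Adj (Sum.inl u) (Sum.inr v) ↔
      (v = x₂ ∧ G₁.Adj x₁ u.1 ∧ u.1 ≠ y₁) ∨ (u.1 = y₁ ∧ v = y₂) := by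
  simp only [hajos, SimpleGraph.fromRel_adj]
  constructor
  · rintro ⟨-, h | h⟩
    · exact h
    · exact h.elim
  · intro h
    exact ⟨by simp, Or.inl h⟩

end Lemmas
set_option linter.unusedSectionVars false
section Lemmas2
variable {V₁ V₂ : Type*} [DecidableEq V₁] [DecidableEq V₂]
  (G₁ : SimpleGraph V₁) (G₂ : SimpleGraph V₂) (x₁ y₁ : V₁) (x₂ y₂ : V₂)

lemma hajos_nbhd_inl (h₁ : G₁.Adj x₁ y₁) (u : {v : V₁ // v ≠ x₁}) :
    (hajos G₁ G₂ x₁ y₁ x₂ y₂).neighborSet (Sum.inl u) =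
      (fun v => if h : v = x₁ then (if u.1 = y₁ then Sum.inr y₂ else Sum.inr x₂)
        else Sum.inl ⟨v, h⟩) '' G₁.neighborSet u.1 := by
  ext w
  constructor
  · intro hw
    match w with
    | Sum.inl v =>
      rw [SimpleGraph.mem_neighborSet, hajos_adj_inl_inl] at hw
      exact ⟨v.1, hw, by simp [dif_neg v.2]⟩
    | Sum.inr v =>
      rw [SimpleGraph.mem_neighborSet, hajos_adj_inl_inr] at hw
      rcases hw with ⟨rfl, ha, hne⟩ | ⟨he, rfl⟩
      · exact ⟨x₁, ha.symm, by simp [hne]⟩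
      · exact ⟨x₁, by rw [he]; exact h₁.symm, by simp [he]⟩
  · rintro ⟨v, hv, rfl⟩
    by_cases h : v = x₁
    · by_cases hy : u.1 = y₁
      · simp only [dif_pos h, if_pos hy]
        rw [SimpleGraph.mem_neighborSet, hajos_adj_inl_inr]
        exact Or.inr ⟨hy, rfl⟩
      · simp only [dif_pos h, if_neg hy]
        rw [SimpleGraph.mem_neighborSet, hajos_adj_inl_inr]
        exact Or.inl ⟨rfl, (h ▸ hv).symm, hy⟩
    · simp only [dif_neg h]
      rw [SimpleGraph.mem_neighborSet, hajos_adj_inl_inl]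
      exact hv

lemma hajos_fun_inj (u : {v : V₁ // v ≠ x₁}) :
    Function.Injective (fun v => if h : v = x₁ then
      (if u.1 = y₁ then (Sum.inr y₂ : {v : V₁ // v ≠ x₁} ⊕ V₂) else Sum.inr x₂)
      else Sum.inl ⟨v, h⟩) := by
  intro a b hab
  by_cases ha : a = x₁ <;> by_cases hb : b = x₁
  · rw [ha, hb]
  · simp only [dif_pos ha, dif_neg hb] at hab
    split at hab <;> simp at hab
  · simp only [dif_neg ha, dif_pos hb] at hab
    split at hab <;> simp at hab
  · simp only [dif_neg ha, dif_neg hb] at hab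
    exact congrArg Subtype.val (Sum.inl.inj hab)

lemma hajos_nbhd_inr (v : V₂) (hvx : v ≠ x₂) (hvy : v ≠ y₂) :
    (hajos G₁ G₂ x₁ y₁ x₂ y₂).neighborSet (Sum.inr v) =
      Sum.inr '' G₂.neighborSet v := by
  ext w
  constructor
  · intro hw
    match w with
    | Sum.inl u =>
      rw [SimpleGraph.mem_neighborSet, (hajos G₁ G₂ x₁ y₁ x₂ y₂).adj_comm,
        hajos_adj_inl_inr] at hw
      rcases hw with ⟨h, -⟩ | ⟨-, h⟩
      · exact absurd h hvx
      · exact absurd h hvy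
    | Sum.inr u =>
      rw [SimpleGraph.mem_neighborSet, hajos_adj_inr_inr] at hw
      exact ⟨u, hw.1, rfl⟩
  · rintro ⟨u, hu, rfl⟩
    rw [SimpleGraph.mem_neighborSet, hajos_adj_inr_inr]
    exact ⟨hu, fun hc => hvx hc.1, fun hc => hvy hc.1⟩

lemma hajos_nbhd_y₂ (h₁ : G₁.Adj x₁ y₁) (h₂ : G₂.Adj x₂ y₂) :
    (hajos G₁ G₂ x₁ y₁ x₂ y₂).neighborSet (Sum.inr y₂) =
      (fun w => if w = x₂ then Sum.inl ⟨y₁, (G₁.ne_of_adj h₁).symm⟩ else Sum.inr w) ''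
        G₂.neighborSet y₂ := by
  have hxy : x₂ ≠ y₂ := G₂.ne_of_adj h₂
  ext w
  constructor
  · intro hw
    match w with
    | Sum.inl u =>
      rw [SimpleGraph.mem_neighborSet, (hajos G₁ G₂ x₁ y₁ x₂ y₂).adj_comm,
        hajos_adj_inl_inr] at hw
      rcases hw with ⟨h, -⟩ | ⟨hu, -⟩
      · exact absurd h.symm hxy
      · exact ⟨x₂, h₂.symm, by simp [Subtype.ext_iff, hu]⟩
    | Sum.inr u =>
      rw [SimpleGraph.mem_neighborSet, hajos_adj_inr_inr] at hw
      obtain ⟨ha, -, hc⟩ := hw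
      have hux : u ≠ x₂ := fun h => hc ⟨rfl, h⟩
      exact ⟨u, ha, by simp [if_neg hux]⟩
  · rintro ⟨u, hu, rfl⟩
    by_cases h : u = x₂
    · simp only [if_pos h]
      rw [SimpleGraph.mem_neighborSet, (hajos G₁ G₂ x₁ y₁ x₂ y₂).adj_comm,
        hajos_adj_inl_inr]
      exact Or.inr ⟨rfl, rfl⟩
    · simp only [if_neg h]
      rw [SimpleGraph.mem_neighborSet, hajos_adj_inr_inr]
      exact ⟨hu, fun hc => hxy hc.1.symm, fun hc => h hc.2⟩

lemma hajos_fun2_inj (hy : y₁ ≠ x₁) :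
    Function.Injective (fun w => if w = x₂ then
      (Sum.inl ⟨y₁, hy⟩ : {v : V₁ // v ≠ x₁} ⊕ V₂) else Sum.inr w) := by
  intro a b hab
  by_cases ha : a = x₂ <;> by_cases hb : b = x₂
  · rw [ha, hb]
  · simp only [if_pos ha, if_neg hb] at hab
    simp at hab
  · simp only [if_neg ha, if_pos hb] at hab
    simp at hab
  · simp only [if_neg ha, if_neg hb] at hab
    exact Sum.inr.inj hab

end Lemmas2

theorem stmt18 {V₁ V₂ : Type*} [Fintype V₁] [Fintype V₂]
    (G₁ : SimpleGraph V₁) (G₂ : SimpleGraph V₂)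
    (hG₁ : G₁.Connected) (hG₂ : G₂.Connected)
    (x₁ y₁ : V₁) (x₂ y₂ : V₂) (h₁ : G₁.Adj x₁ y₁) (h₂ : G₂.Adj x₂ y₂) :
    gammaCoe (hajos G₁ G₂ x₁ y₁ x₂ y₂) ≤ gammaCoe G₁ + gammaCoe G₂ + 1 := by
  classical
  have hne₁ : {n | ∃ D : Set V₁, IsCoEvenDomSet G₁ D ∧ D.ncard = n}.Nonempty :=
    ⟨(Set.univ : Set V₁).ncard, Set.univ,
      ⟨fun v hv => absurd (Set.mem_univ v) hv, fun v hv => absurd (Set.mem_univ v) hv⟩, rfl⟩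
  have hne₂ : {n | ∃ D : Set V₂, IsCoEvenDomSet G₂ D ∧ D.ncard = n}.Nonempty :=
    ⟨(Set.univ : Set V₂).ncard, Set.univ,
      ⟨fun v hv => absurd (Set.mem_univ v) hv, fun v hv => absurd (Set.mem_univ v) hv⟩, rfl⟩
  obtain ⟨D₁, hD₁, hc₁⟩ := Nat.sInf_mem hne₁
  obtain ⟨D₂, hD₂, hc₂⟩ := Nat.sInf_mem hne₂
  set T : Set V₂ := if x₁ ∈ D₁ ∨ x₂ ∈ D₂ then {y₂} else ∅ with hT
  set B : Set V₂ := D₂ ∪ {x₂} ∪ T with hB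
  set A : Set {v : V₁ // v ≠ x₁} := Subtype.val ⁻¹' D₁ with hA
  set D : Set ({v : V₁ // v ≠ x₁} ⊕ V₂) := Sum.inl '' A ∪ Sum.inr '' B with hD
  have memD_inl : ∀ u : {v : V₁ // v ≠ x₁}, Sum.inl u ∈ D ↔ u.1 ∈ D₁ := by
    intro u; simp [hD, hA]
  have memD_inr : ∀ v : V₂, (Sum.inr v : {v : V₁ // v ≠ x₁} ⊕ V₂) ∈ D ↔ v ∈ B := by
    intro v; simp [hD]
  have hx2B : x₂ ∈ B := Or.inl (Or.inr rfl)
  have hy2B : (x₁ ∈ D₁ ∨ x₂ ∈ D₂) → y₂ ∈ B := fun h => Or.inr (by rw [hT, if_pos h]; rfl)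
  -- D is a co-even dominating set of the Hajós sum
  have hcoe : IsCoEvenDomSet (hajos G₁ G₂ x₁ y₁ x₂ y₂) D := by
    constructor
    · intro w hw
      match w with
      | Sum.inl u =>
        have hu : u.1 ∉ D₁ := fun h => hw ((memD_inl u).mpr h)
        obtain ⟨z, hz, hadj⟩ := hD₁.1 u.1 hu
        by_cases hz1 : z = x₁
        · by_cases hy : u.1 = y₁
          · refine ⟨Sum.inr y₂, (memD_inr y₂).mpr (hy2B (Or.inl (hz1 ▸ hz))), ?_⟩
            rw [(hajos G₁ G₂ x₁ y₁ x₂ y₂).adj_comm, hajos_adj_inl_inr]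
            exact Or.inr ⟨hy, rfl⟩
          · refine ⟨Sum.inr x₂, (memD_inr x₂).mpr hx2B, ?_⟩
            rw [(hajos G₁ G₂ x₁ y₁ x₂ y₂).adj_comm, hajos_adj_inl_inr]
            exact Or.inl ⟨rfl, hz1 ▸ hadj, hy⟩
        · refine ⟨Sum.inl ⟨z, hz1⟩, (memD_inl ⟨z, hz1⟩).mpr hz, ?_⟩
          rw [hajos_adj_inl_inl]
          exact hadj
      | Sum.inr v =>
        have hv : v ∉ B := fun h => hw ((memD_inr v).mpr h)
        have hv₂ : v ∉ D₂ := fun h => hv (Or.inl (Or.inl h))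
        have hvx : v ≠ x₂ := fun h => hv (Or.inl (Or.inr h))
        obtain ⟨z, hz, hadj⟩ := hD₂.1 v hv₂
        by_cases hc : z = x₂ ∧ v = y₂
        · exact absurd (hy2B (Or.inr (hc.1 ▸ hz))) (fun h => hv (hc.2 ▸ h))
        · refine ⟨Sum.inr z, (memD_inr z).mpr (Or.inl (Or.inl hz)), ?_⟩
          rw [hajos_adj_inr_inr]
          exact ⟨hadj, hc, fun h => hvx h.2⟩
    · intro w hw
      match w with
      | Sum.inl u =>
        have hu : u.1 ∉ D₁ := fun h => hw ((memD_inl u).mpr h)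
        rw [hajos_nbhd_inl G₁ G₂ x₁ y₁ x₂ y₂ h₁ u,
          Set.ncard_image_of_injective _ (hajos_fun_inj x₁ y₁ x₂ y₂ u)]
        exact hD₁.2 u.1 hu
      | Sum.inr v =>
        have hv : v ∉ B := fun h => hw ((memD_inr v).mpr h)
        have hv₂ : v ∉ D₂ := fun h => hv (Or.inl (Or.inl h))
        have hvx : v ≠ x₂ := fun h => hv (Or.inl (Or.inr h))
        by_cases hvy : v = y₂
        · rw [hvy, hajos_nbhd_y₂ G₁ G₂ x₁ y₁ x₂ y₂ h₁ h₂,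
            Set.ncard_image_of_injective _ (hajos_fun2_inj x₁ y₁ x₂ (G₁.ne_of_adj h₁).symm)]
          exact hD₂.2 _ (hvy ▸ hv₂)
        · rw [hajos_nbhd_inr G₁ G₂ x₁ y₁ x₂ y₂ v hvx hvy,
            Set.ncard_image_of_injective _ Sum.inr_injective]
          exact hD₂.2 v hv₂
  have hle : gammaCoe (hajos G₁ G₂ x₁ y₁ x₂ y₂) ≤ D.ncard :=
    Nat.sInf_le ⟨D, hcoe, rfl⟩
  -- cardinality computations
  have hdisj : Disjoint (Sum.inl '' A) (Sum.inr '' B : Set ({v : V₁ // v ≠ x₁} ⊕ V₂)) := by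
    rw [Set.disjoint_left]
    rintro w ⟨a, -, rfl⟩ ⟨b, -, hb⟩
    exact Sum.inl_ne_inr hb.symm
  have hDcard : D.ncard = A.ncard + B.ncard := by
    rw [hD, Set.ncard_union_eq hdisj (Set.toFinite _) (Set.toFinite _),
      Set.ncard_image_of_injective _ Sum.inl_injective,
      Set.ncard_image_of_injective _ Sum.inr_injective]
  have hAcard : A.ncard = (D₁ \ {x₁}).ncard := by
    rw [← Set.ncard_image_of_injective A Subtype.val_injective]
    congr 1
    ext v
    simp only [Set.mem_image, Set.mem_preimage, Set.mem_diff, Set.mem_singleton_iff, hA]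
    constructor
    · rintro ⟨a, ha, rfl⟩
      exact ⟨ha, a.2⟩
    · rintro ⟨hv, hvx⟩
      exact ⟨⟨v, hvx⟩, hv, rfl⟩
  have hTcard : T.ncard ≤ 1 := by
    rw [hT]
    split
    · simp
    · simp
  have hBcard : B.ncard ≤ D₂.ncard + 2 := by
    calc B.ncard ≤ (D₂ ∪ {x₂}).ncard + T.ncard :=
          Set.ncard_union_le _ _
      _ ≤ (D₂.ncard + ({x₂} : Set V₂).ncard) + T.ncard := by
          exact Nat.add_le_add_right (Set.ncard_union_le _ _) _
      _ ≤ D₂.ncard + 2 := by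
          rw [Set.ncard_singleton]
          omega
  have e₁ : gammaCoe G₁ = D₁.ncard := hc₁.symm
  have e₂ : gammaCoe G₂ = D₂.ncard := hc₂.symm
  rw [e₁, e₂]
  by_cases hx1 : x₁ ∈ D₁
  · have h1 : 1 ≤ D₁.ncard := Set.ncard_pos (Set.toFinite _) |>.mpr ⟨x₁, hx1⟩
    have hA1 : A.ncard = D₁.ncard - 1 := by
      rw [hAcard, Set.ncard_diff_singleton_of_mem hx1]
    omega
  · have hA1 : A.ncard = D₁.ncard := by
      rw [hAcard]
      congr 1
      rw [Set.diff_singleton_eq_self hx1]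
    have hB1 : B.ncard ≤ D₂.ncard + 1 := by
      by_cases hx2 : x₂ ∈ D₂
      · have hsub : B ⊆ D₂ ∪ {y₂} := by
          rw [hB]
          intro v hv
          rcases hv with (hv | hv) | hv
          · exact Or.inl hv
          · exact Or.inl (hv ▸ hx2)
          · rw [hT] at hv
            split at hv
            · exact Or.inr hv
            · exact hv.elim
        calc B.ncard ≤ (D₂ ∪ {y₂}).ncard := Set.ncard_le_ncard hsub (Set.toFinite _)
          _ ≤ D₂.ncard + 1 := by
              have := Set.ncard_union_le D₂ ({y₂} : Set V₂)
              rwa [Set.ncard_singleton] at this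
      · have hTe : T = ∅ := by
          rw [hT, if_neg]
          push_neg
          exact ⟨hx1, hx2⟩
        have : B = D₂ ∪ {x₂} := by rw [hB, hTe, Set.union_empty]
        rw [this]
        have := Set.ncard_union_le D₂ ({x₂} : Set V₂)
        rwa [Set.ncard_singleton] at this
    omega
end
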